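/- arXiv:1808.03586 — 4 statements merged into one kernel-verified Lean document; each statement's English description precedes it below -/
import Mathlib

section
/- For every integer k ≥ 0 and every real v ∈ (0,1), one has ∫₀¹ (log(e²/s))^k / √(s(s+v)) ds ≤ 2^{k+1} · k! · Σ_{i=0}^{k+1} (log(e²/v))^i / (2^i · i!). -/
/-!
Split the integral at `v`. On `(0, v]` use `√(s(s+v)) ≥ √s √v`: the function
`2^(k+1) k! √s Σ_{j ≤ k} ((c - log s)/2)^j / j!` is an antiderivative of `(c - log s)^k / √s`
that tends to `0` at `0⁺`, so this piece is at most the first `k + 1` terms of the bound.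
On `[v, 1]` use `√(s(s+v)) ≥ s`: the piece is at most `(c - log v)^(k+1) / (k+1)`, which is
`2^(k+1) k!` times the next term `((c - log v)/2)^(k+1) / (k+1)!`.
-/

open Real MeasureTheory Filter Topology Set Asymptotics
open scoped Nat

noncomputable def expPartialSum (n : ℕ) (x : ℝ) : ℝ := ∑ i ∈ Finset.range n, x ^ i / i !

lemma expPartialSum_succ (n : ℕ) (x : ℝ) :
    expPartialSum (n + 1) x = expPartialSum n x + x ^ n / n ! :=
  Finset.sum_range_succ _ _

lemma hasDerivAt_expPartialSum_succ (n : ℕ) (x : ℝ) :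
    HasDerivAt (expPartialSum (n + 1)) (expPartialSum n x) x := by
  induction n with
  | zero =>
    have h1 : expPartialSum 1 = fun _ => 1 := funext fun y => by simp [expPartialSum]
    simpa [h1, expPartialSum] using hasDerivAt_const x (1 : ℝ)
  | succ n ih =>
    have hterm : HasDerivAt (fun y : ℝ => y ^ (n + 1) / ((n + 1)! : ℝ)) (x ^ n / n !) x := by
      refine ((hasDerivAt_pow (n + 1) x).div_const ((n + 1)! : ℝ)).congr_deriv ?_
      rw [Nat.add_sub_cancel, Nat.factorial_succ]
      push_cast
      field_simp
    rw [funext (expPartialSum_succ (n + 1)), expPartialSum_succ]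
    exact ih.add hterm

lemma tendsto_rpow_mul_pow_sub_log (c : ℝ) (n : ℕ) {r : ℝ} (hr : 0 < r) :
    Tendsto (fun s => s ^ r * (c - log s) ^ n) (𝓝[>] 0) (𝓝 0) := by
  have hlog : Tendsto (norm ∘ log) (𝓝[>] 0) atTop :=
    tendsto_abs_atBot_atTop.comp tendsto_log_nhdsGT_zero
  have hsub : (fun s => c - log s) =O[𝓝[>] 0] log :=
    (isLittleO_const_left.2 (Or.inr hlog)).isBigO.sub (isBigO_refl _ _)
  have hpow : (fun s => log s ^ n) =o[𝓝[>] 0] fun s => s ^ (-r) :=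
    IsLittleO.of_norm_left <| by
      simpa only [rpow_natCast, norm_pow, norm_eq_abs] using
        isLittleO_abs_log_rpow_rpow_nhdsGT_zero (n : ℝ) (neg_lt_zero.2 hr)
  refine ((hsub.pow n).trans_isLittleO hpow).tendsto_div_nhds_zero.congr' ?_
  filter_upwards [self_mem_nhdsWithin] with s hs
  rw [rpow_neg (le_of_lt hs), div_inv_eq_mul, mul_comm]

lemma sub_log_nonneg {c s : ℝ} (hs : 0 < s) (hsc : s ≤ exp c) : 0 ≤ c - log s :=
  sub_nonneg.2 ((log_le_iff_le_exp hs).2 hsc)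

noncomputable def logPowDivSqrtAntideriv (c : ℝ) (k : ℕ) (s : ℝ) : ℝ :=
  2 ^ (k + 1) * k ! * (√s * expPartialSum (k + 1) ((c - log s) / 2))

section Antideriv

variable (c : ℝ) (k : ℕ)

lemma hasDerivAt_logPowDivSqrtAntideriv {s : ℝ} (hs : 0 < s) :
    HasDerivAt (logPowDivSqrtAntideriv c k) ((c - log s) ^ k / √s) s := by
  have hy : HasDerivAt (fun s => (c - log s) / 2) (-s⁻¹ / 2) s :=
    ((hasDerivAt_log hs.ne').const_sub c).div_const 2
  have h := ((hasDerivAt_sqrt hs.ne').mul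
    ((hasDerivAt_expPartialSum_succ k _).comp s hy)).const_mul (2 ^ (k + 1) * (k ! : ℝ))
  refine h.congr_deriv ?_
  have hsqrt : 0 < √s := sqrt_pos.2 hs
  rw [Function.comp_apply, expPartialSum_succ, div_pow]
  field_simp
  rw [sq_sqrt hs.le]
  ring

lemma tendsto_logPowDivSqrtAntideriv_nhdsGT_zero :
    Tendsto (logPowDivSqrtAntideriv c k) (𝓝[>] 0) (𝓝 0) := by
  have hterm : ∀ i ∈ Finset.range (k + 1),
      Tendsto (fun s => √s * (((c - log s) / 2) ^ i / i !)) (𝓝[>] 0) (𝓝 0) := fun i _ => by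
    simpa using ((tendsto_rpow_mul_pow_sub_log c i one_half_pos).mul_const
      ((2 : ℝ) ^ i * i !)⁻¹).congr' <| Eventually.of_forall fun s => by
        rw [sqrt_eq_rpow, div_pow]; ring
  have h := (tendsto_finsetSum _ hterm).const_mul (2 ^ (k + 1) * (k ! : ℝ))
  rw [Finset.sum_const_zero, mul_zero] at h
  exact h.congr fun s => by simp only [logPowDivSqrtAntideriv, expPartialSum, Finset.mul_sum]

lemma continuousOn_logPowDivSqrtAntideriv :
    ContinuousOn (logPowDivSqrtAntideriv c k) (Ici 0) := by
  intro s hs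
  rcases (mem_Ici.1 hs).eq_or_lt with rfl | hs
  · have h0 : logPowDivSqrtAntideriv c k 0 = 0 := by simp [logPowDivSqrtAntideriv]
    refine continuousWithinAt_Ioi_iff_Ici.1 ?_
    rw [ContinuousWithinAt, h0]
    exact tendsto_logPowDivSqrtAntideriv_nhdsGT_zero c k
  · exact (hasDerivAt_logPowDivSqrtAntideriv c k hs).continuousAt.continuousWithinAt

variable {c} {b : ℝ}

lemma intervalIntegrable_log_pow_div_sqrt (hb0 : 0 ≤ b) (hb : b ≤ exp c) :
    IntervalIntegrable (fun s => (c - log s) ^ k / √s) volume 0 b :=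
  (intervalIntegrable_iff_integrableOn_Ioc_of_le hb0).2 <|
    intervalIntegral.integrableOn_deriv_of_nonneg
      ((continuousOn_logPowDivSqrtAntideriv c k).mono Icc_subset_Ici_self)
      (fun _ hs => hasDerivAt_logPowDivSqrtAntideriv c k hs.1)
      (fun s hs => div_nonneg (pow_nonneg (sub_log_nonneg hs.1 (hs.2.le.trans hb)) k)
        (sqrt_nonneg s))

lemma integral_log_pow_div_sqrt (hb0 : 0 ≤ b) (hb : b ≤ exp c) :
    ∫ s in 0..b, (c - log s) ^ k / √s = logPowDivSqrtAntideriv c k b := by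
  rw [intervalIntegral.integral_eq_sub_of_hasDerivAt_of_le hb0
    ((continuousOn_logPowDivSqrtAntideriv c k).mono Icc_subset_Ici_self)
    (fun _ hs => hasDerivAt_logPowDivSqrtAntideriv c k hs.1)
    (intervalIntegrable_log_pow_div_sqrt k hb0 hb)]
  simp [logPowDivSqrtAntideriv]

end Antideriv

lemma continuousOn_log_pow_div_self (c : ℝ) (k : ℕ) :
    ContinuousOn (fun s => (c - log s) ^ k / s) (Ioi 0) := fun _ hs =>
  ContinuousAt.continuousWithinAt <|
    ((continuousAt_const.sub (continuousAt_log (ne_of_gt hs))).pow k).div continuousAt_id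
      (ne_of_gt hs)

lemma integral_log_pow_div_self (c : ℝ) (k : ℕ) {a b : ℝ} (ha : 0 < a) (hb : 0 < b) :
    ∫ s in a..b, (c - log s) ^ k / s =
      ((c - log a) ^ (k + 1) - (c - log b) ^ (k + 1)) / (k + 1) := by
  have hpos : ∀ s ∈ uIcc a b, 0 < s := fun s hs => (lt_min ha hb).trans_le hs.1
  have hderiv : ∀ s ∈ uIcc a b,
      HasDerivAt (fun s => -(c - log s) ^ (k + 1) / (k + 1)) ((c - log s) ^ k / s) s := by
    intro s hs
    refine ((((hasDerivAt_log (hpos s hs).ne').const_sub c).pow (k + 1)).neg.div_const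
      ((k : ℝ) + 1)).congr_deriv ?_
    push_cast [Nat.add_sub_cancel]
    field_simp
  rw [intervalIntegral.integral_eq_sub_of_hasDerivAt hderiv
    ((continuousOn_log_pow_div_self c k).mono hpos).intervalIntegrable]
  ring

lemma div_sqrt_mul_add_le_div_sqrt_mul_sqrt {A s v : ℝ} (hA : 0 ≤ A) (hs : 0 < s) (hv : 0 < v) :
    A / √(s * (s + v)) ≤ A / (√s * √v) := by
  rw [← sqrt_mul hs.le]
  exact div_le_div_of_nonneg_left hA (by positivity) (sqrt_le_sqrt (by nlinarith))

lemma div_sqrt_mul_add_le_div_self {A s v : ℝ} (hA : 0 ≤ A) (hs : 0 < s) (hv : 0 ≤ v) :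
    A / √(s * (s + v)) ≤ A / s := by
  refine div_le_div_of_nonneg_left hA hs ?_
  calc s = √(s * s) := (sqrt_mul_self hs.le).symm
    _ ≤ √(s * (s + v)) := sqrt_le_sqrt (by nlinarith)

lemma IntervalIntegrable.of_nonneg_of_le {f g : ℝ → ℝ} {a b : ℝ}
    (hg : IntervalIntegrable g volume a b) (hab : a ≤ b) (hf : Measurable f)
    (hfg : ∀ s ∈ Ioc a b, 0 ≤ f s ∧ f s ≤ g s) : IntervalIntegrable f volume a b :=
  hg.mono_fun' hf.aestronglyMeasurable <| by
    rw [uIoc_of_le hab, EventuallyLE, ae_restrict_iff' measurableSet_Ioc]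
    exact Eventually.of_forall fun s hs => (norm_of_nonneg (hfg s hs).1).trans_le (hfg s hs).2

lemma logPowDivSqrtAntideriv_div_sqrt_add (c : ℝ) (k : ℕ) {v : ℝ} (hv : 0 < v) :
    logPowDivSqrtAntideriv c k v / √v + (c - log v) ^ (k + 1) / (k + 1) =
      2 ^ (k + 1) * k ! * expPartialSum (k + 2) ((c - log v) / 2) := by
  have hsqrt : 0 < √v := sqrt_pos.2 hv
  rw [logPowDivSqrtAntideriv, expPartialSum_succ (k + 1), Nat.factorial_succ, div_pow]
  push_cast
  field_simp

theorem integral_log_pow_div_sqrt_mul_add_le {c : ℝ} (hc : 0 ≤ c) (k : ℕ) {v : ℝ}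
    (hv0 : 0 < v) (hv1 : v ≤ 1) :
    ∫ s in 0..1, (c - log s) ^ k / √(s * (s + v)) ≤
      2 ^ (k + 1) * k ! * expPartialSum (k + 2) ((c - log v) / 2) := by
  set f : ℝ → ℝ := fun s => (c - log s) ^ k / √(s * (s + v))
  have hL : ∀ s ∈ Ioc 0 1, 0 ≤ (c - log s) ^ k := fun s hs =>
    pow_nonneg (sub_log_nonneg hs.1 (hs.2.trans (one_le_exp hc))) k
  have hleft : ∀ s ∈ Ioc 0 v, 0 ≤ f s ∧ f s ≤ (c - log s) ^ k / √s / √v := fun s hs => by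
    have hLs := hL s ⟨hs.1, hs.2.trans hv1⟩
    exact ⟨div_nonneg hLs (sqrt_nonneg _),
      div_div _ √s √v ▸ div_sqrt_mul_add_le_div_sqrt_mul_sqrt hLs hs.1 hv0⟩
  have hright : ∀ s ∈ Ioc v 1, 0 ≤ f s ∧ f s ≤ (c - log s) ^ k / s := fun s hs => by
    have hLs := hL s ⟨hv0.trans hs.1, hs.2⟩
    exact ⟨div_nonneg hLs (sqrt_nonneg _),
      div_sqrt_mul_add_le_div_self hLs (hv0.trans hs.1) hv0.le⟩
  have hvc : v ≤ exp c := hv1.trans (one_le_exp hc)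
  have hgl := (intervalIntegrable_log_pow_div_sqrt k hv0.le hvc).div_const √v
  have hgr : IntervalIntegrable (fun s => (c - log s) ^ k / s) volume v 1 :=
    ((continuousOn_log_pow_div_self c k).mono fun s hs =>
      hv0.trans_le ((uIcc_of_le hv1 ▸ hs).1)).intervalIntegrable
  have hmeas : Measurable f := by fun_prop
  have hfl := hgl.of_nonneg_of_le hv0.le hmeas hleft
  have hfr := hgr.of_nonneg_of_le hv1 hmeas hright
  calc ∫ s in 0..1, f s = (∫ s in 0..v, f s) + ∫ s in v..1, f s :=
        (intervalIntegral.integral_add_adjacent_intervals hfl hfr).symm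
    _ ≤ (∫ s in 0..v, (c - log s) ^ k / √s / √v) + ∫ s in v..1, (c - log s) ^ k / s :=
        add_le_add
          (intervalIntegral.integral_mono_on_of_le_Ioo hv0.le hfl hgl fun s hs =>
            (hleft s (Ioo_subset_Ioc_self hs)).2)
          (intervalIntegral.integral_mono_on_of_le_Ioo hv1 hfr hgr fun s hs =>
            (hright s (Ioo_subset_Ioc_self hs)).2)
    _ = logPowDivSqrtAntideriv c k v / √v + ((c - log v) ^ (k + 1) - c ^ (k + 1)) / (k + 1) := by
        rw [intervalIntegral.integral_div, integral_log_pow_div_sqrt k hv0.le hvc,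
          integral_log_pow_div_self c k hv0 one_pos, log_one, sub_zero]
    _ ≤ logPowDivSqrtAntideriv c k v / √v + (c - log v) ^ (k + 1) / (k + 1) := by
        gcongr
        exact sub_le_self _ (pow_nonneg hc _)
    _ = 2 ^ (k + 1) * k ! * expPartialSum (k + 2) ((c - log v) / 2) :=
        logPowDivSqrtAntideriv_div_sqrt_add c k hv0

theorem stmt_0 (k : ℕ) (v : ℝ) (hv : v ∈ Set.Ioo (0:ℝ) 1) :
    ∫ s in (0:ℝ)..1, (Real.log (Real.exp 2 / s)) ^ k / Real.sqrt (s * (s + v))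
      ≤ 2 ^ (k + 1) * (Nat.factorial k : ℝ) *
        ∑ i ∈ Finset.range (k + 2),
          (Real.log (Real.exp 2 / v)) ^ i / (2 ^ i * (Nat.factorial i : ℝ)) := by
  have hlog : ∀ s ≠ 0, log (exp 2 / s) = 2 - log s := fun s hs => by
    rw [log_div (exp_ne_zero 2) hs, log_exp]
  have hintegrand : (fun s => log (exp 2 / s) ^ k / √(s * (s + v))) =
      fun s => (2 - log s) ^ k / √(s * (s + v)) := by
    funext s
    rcases eq_or_ne s 0 with rfl | hs
    · simp -- both sides are `x / √0 = 0`
    · rw [hlog s hs]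
  rw [hintegrand, hlog v hv.1.ne']
  simpa only [expPartialSum, div_pow, div_div] using
    integral_log_pow_div_sqrt_mul_add_le zero_le_two k hv.1 hv.2.le
end

section
/- Define coefficients c_{k,i} for k ≥ 1, 0 ≤ i ≤ k by c_{1,0} = 0, c_{1,1} = 2, and the recursion c_{k,i} = 2 · Σ_{j=(i-1)⁺}^{k-1} c_{k-1,j}, where (i-1)⁺ = max(i-1, 0). Then for every k ≥ 1 and 0 ≤ i ≤ k, c_{k,i} ≤ 32^k. -/
open Finset

lemma geo_Icc_eq : ∀ b a : ℕ, a ≤ b + 1 →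
    ∑ j ∈ Finset.Icc a b, ((2:ℝ)⁻¹)^j = 2 * ((2:ℝ)⁻¹)^a - ((2:ℝ)⁻¹)^b := by
  intro b
  induction b with
  | zero =>
    intro a ha
    interval_cases a
    · simp; norm_num
    · rw [show Finset.Icc 1 0 = ∅ by rfl]; simp
  | succ b ih =>
    intro a ha
    rcases Nat.lt_or_ge a (b + 2) with h | h
    · rcases Nat.lt_or_ge b a with h' | h'
      · -- a = b + 1
        have : a = b + 1 := by omega
        subst this
        rw [Finset.Icc_self]
        simp [pow_succ]
        ring
      · rw [Finset.sum_Icc_succ_top (by omega : a ≤ b + 1)]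
        rw [ih a (by omega)]
        rw [pow_succ]
        ring
    · have : a = b + 2 := by omega
      subst this
      rw [Finset.Icc_eq_empty (by omega)]
      simp [pow_succ]
      ring

lemma geo_Icc (a b : ℕ) : ∑ j ∈ Finset.Icc a b, ((2:ℝ)⁻¹)^j ≤ 2 * ((2:ℝ)⁻¹)^a := by
  rcases Nat.lt_or_ge (b + 1) a with h | h
  · rw [Finset.Icc_eq_empty (by omega)]
    positivity
  · rw [geo_Icc_eq b a h]
    have : (0:ℝ) ≤ ((2:ℝ)⁻¹)^b := by positivity
    linarith

theorem stmt_2 (c : ℕ → ℕ → ℝ)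
    (h10 : c 1 0 = 0) (h11 : c 1 1 = 2)
    (hrec : ∀ k i, 2 ≤ k → i ≤ k →
      c k i = 2 * ∑ j ∈ Finset.Icc (i - 1) (k - 1), c (k - 1) j) :
    ∀ k i, 1 ≤ k → i ≤ k → c k i ≤ 32 ^ k := by
  have key : ∀ k, 1 ≤ k → ∀ i, i ≤ k → c k i ≤ 32 ^ k * ((2:ℝ)⁻¹)^i := by
    intro k hk
    induction k, hk using Nat.le_induction with
    | base =>
      intro i hi
      interval_cases i
      · rw [h10]; norm_num
      · rw [h11]; norm_num
    | succ k hk ih =>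
      intro i hi
      have h2 : 2 ≤ k + 1 := by omega
      rw [hrec (k+1) i h2 hi]
      have hsub : (k + 1 : ℕ) - 1 = k := by omega
      rw [hsub]
      have hbound : ∑ j ∈ Finset.Icc (i-1) k, c k j
          ≤ ∑ j ∈ Finset.Icc (i-1) k, 32 ^ k * ((2:ℝ)⁻¹)^j := by
        apply Finset.sum_le_sum
        intro j hj
        exact ih j (Finset.mem_Icc.mp hj).2
      have hgeo : ∑ j ∈ Finset.Icc (i-1) k, 32 ^ k * ((2:ℝ)⁻¹)^j
          ≤ (32:ℝ) ^ k * (2 * ((2:ℝ)⁻¹)^(i-1)) := by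
        rw [← Finset.mul_sum]
        have := geo_Icc (i-1) k
        have h32 : (0:ℝ) ≤ (32:ℝ)^k := by positivity
        nlinarith
      have hstep : ((2:ℝ)⁻¹)^(i-1) ≤ 2 * ((2:ℝ)⁻¹)^i := by
        rcases Nat.eq_zero_or_pos i with h0 | h0
        · subst h0; norm_num
        · have hi' : ((2:ℝ)⁻¹)^i = ((2:ℝ)⁻¹)^(i-1) * 2⁻¹ := by
            rw [← pow_succ]; congr 1; omega
          rw [hi']
          have : (0:ℝ) ≤ ((2:ℝ)⁻¹)^(i-1) := by positivity
          nlinarith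
      have h32 : (0:ℝ) ≤ (32:ℝ)^k := by positivity
      have hfin : (32:ℝ)^(k+1) * ((2:ℝ)⁻¹)^i = 32 * ((32:ℝ)^k * ((2:ℝ)⁻¹)^i) := by ring
      nlinarith [pow_nonneg (by norm_num : (0:ℝ) ≤ 2⁻¹) i]
  intro k i hk hi
  have := key k hk i hi
  have hle : ((2:ℝ)⁻¹)^i ≤ 1 := pow_le_one₀ (by norm_num) (by norm_num)
  have h32 : (0:ℝ) ≤ (32:ℝ)^k := by positivity
  nlinarith
end

section
/- Let Ĝ(t) = c / (t · (log(e²/t))²) for t ∈ (0,1], where c > 0 is a constant. Then Ĝ is strictly decreasing on (0,1), and for every λ ≥ 1, ∫₀¹ e^{-λv} Ĝ(v) dv ≤ 2c / (2 + log λ). -/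
/-!
Since `log (e² / t) = 2 - log t`, the function `Ĝ = logKernel c` is the derivative of
`c / (2 - log t)`, which tends to `0` as `t → 0⁺`; hence `∫₀^a Ĝ = c / (2 - log a)`.
Put `L = 2 + log λ`. Over `[0, 1/λ]` the integral is at most `∫₀^{1/λ} Ĝ = c / L`.
On `[1/λ, 1]` monotonicity gives `Ĝ ≤ Ĝ(1/λ) = c λ / L²`, and
`∫_{1/λ}^∞ e^{-λv} dv = e⁻¹ / λ`, so that part is at most `e⁻¹ c / L² ≤ c / L`.
Monotonicity: `t (2 - log t)²` has derivative `(2 - log t) (-log t) > 0` on `(0, 1)`.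
-/

open Real Set Filter Topology MeasureTheory

noncomputable def logKernel (c t : ℝ) : ℝ := c / (t * (2 - log t) ^ 2)

noncomputable def logKernelPrimitive (c t : ℝ) : ℝ := if t ≤ 0 then 0 else c / (2 - log t)

lemma log_exp_two_div {t : ℝ} (ht : 0 < t) : log (exp 2 / t) = 2 - log t := by
  rw [log_div (exp_ne_zero 2) ht.ne', log_exp]

lemma strictMonoOn_mul_two_sub_log_sq :
    StrictMonoOn (fun t => t * (2 - log t) ^ 2) (Ioc 0 1) := by
  have hderiv : ∀ t ≠ 0,
      HasDerivAt (fun t => t * (2 - log t) ^ 2) ((2 - log t) * -log t) t := fun t ht => by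
    refine ((hasDerivAt_id' t).fun_mul
      (((hasDerivAt_log ht).const_sub 2).fun_pow 2)).congr_deriv ?_
    field_simp
    ring
  refine strictMonoOn_of_deriv_pos (convex_Ioc 0 1)
    (fun t ht => (hderiv t ht.1.ne').continuousAt.continuousWithinAt) fun t ht => ?_
  rw [interior_Ioc] at ht
  have hlog : log t < 0 := log_neg ht.1 ht.2
  rw [(hderiv t ht.1.ne').deriv]
  exact mul_pos (by linarith) (by linarith)

lemma mul_two_sub_log_sq_pos {t : ℝ} (ht : t ∈ Ioc (0 : ℝ) 1) : 0 < t * (2 - log t) ^ 2 := by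
  have := log_nonpos ht.1.le ht.2
  exact mul_pos ht.1 (pow_pos (by linarith) 2)

lemma logKernel_strictAntiOn {c : ℝ} (hc : 0 < c) : StrictAntiOn (logKernel c) (Ioc 0 1) :=
  fun _ hs _ ht hst =>
    div_lt_div_of_pos_left hc (mul_two_sub_log_sq_pos hs)
      (strictMonoOn_mul_two_sub_log_sq hs ht hst)

lemma logKernel_antitoneOn {c : ℝ} (hc : 0 ≤ c) : AntitoneOn (logKernel c) (Ioc 0 1) :=
  fun _ hs _ ht hst => div_le_div_of_nonneg_left hc (mul_two_sub_log_sq_pos hs)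
    (strictMonoOn_mul_two_sub_log_sq.monotoneOn hs ht hst)

lemma logKernel_nonneg {c t : ℝ} (hc : 0 ≤ c) (ht : 0 ≤ t) : 0 ≤ logKernel c t := by
  unfold logKernel
  positivity

lemma hasDerivAt_logKernelPrimitive {c t : ℝ} (ht₀ : 0 < t) (ht₁ : t ≤ 1) :
    HasDerivAt (logKernelPrimitive c) (logKernel c t) t := by
  have hne : 2 - log t ≠ 0 := by linarith [log_nonpos ht₀.le ht₁]
  have h := (((hasDerivAt_log ht₀.ne').const_sub 2).fun_inv hne).const_mul c
  rw [show logKernel c t = c * (-(-t⁻¹) / (2 - log t) ^ 2) by rw [logKernel]; field_simp]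
  refine h.congr_of_eventuallyEq ?_
  filter_upwards [Ioi_mem_nhds ht₀] with x hx
  rw [logKernelPrimitive, if_neg (not_le.2 hx), div_eq_mul_inv]

lemma continuousOn_logKernelPrimitive (c : ℝ) :
    ContinuousOn (logKernelPrimitive c) (Icc 0 1) := by
  intro t ht
  rcases ht.1.eq_or_lt with rfl | ht₀
  · have hlim : Tendsto (fun x => c / (2 - log x)) (𝓝[>] 0) (𝓝 0) :=
      tendsto_const_nhds.div_atTop
        (tendsto_atTop_add_const_left _ 2 (tendsto_neg_atBot_atTop.comp tendsto_log_nhdsGT_zero))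
    have h : ContinuousWithinAt (logKernelPrimitive c) (Ioi 0) 0 := by
      rw [ContinuousWithinAt, logKernelPrimitive, if_pos le_rfl]
      exact hlim.congr' (eventually_nhdsWithin_of_forall fun x hx => (if_neg (not_le.2 hx)).symm)
    exact (continuousWithinAt_Ioi_iff_Ici.1 h).mono Icc_subset_Ici_self
  · exact (hasDerivAt_logKernelPrimitive ht₀ ht.2).continuousAt.continuousWithinAt

lemma intervalIntegrable_logKernel {c a : ℝ} (hc : 0 ≤ c) (ha₀ : 0 ≤ a) (ha₁ : a ≤ 1) :
    IntervalIntegrable (logKernel c) volume 0 a := by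
  apply intervalIntegral.intervalIntegrable_deriv_of_nonneg (g := logKernelPrimitive c)
  · rw [uIcc_of_le ha₀]
    exact (continuousOn_logKernelPrimitive c).mono (Icc_subset_Icc_right ha₁)
  · rw [min_eq_left ha₀, max_eq_right ha₀]
    exact fun t ht => hasDerivAt_logKernelPrimitive ht.1 (ht.2.le.trans ha₁)
  · rw [min_eq_left ha₀]
    exact fun t ht => logKernel_nonneg hc ht.1.le

lemma integral_logKernel {c a : ℝ} (hc : 0 ≤ c) (ha₀ : 0 ≤ a) (ha₁ : a ≤ 1) :
    ∫ t in 0..a, logKernel c t = logKernelPrimitive c a := by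
  rw [intervalIntegral.integral_eq_sub_of_hasDerivAt_of_le ha₀
    ((continuousOn_logKernelPrimitive c).mono (Icc_subset_Icc_right ha₁))
    (fun t ht => hasDerivAt_logKernelPrimitive ht.1 (ht.2.le.trans ha₁))
    (intervalIntegrable_logKernel hc ha₀ ha₁)]
  simp [logKernelPrimitive]

lemma integral_exp_neg_mul_le {lam : ℝ} (hlam : 0 < lam) (a b : ℝ) :
    ∫ v in a..b, exp (-lam * v) ≤ exp (-lam * a) / lam := by
  rw [intervalIntegral.integral_comp_mul_left (fun x => exp x) (neg_ne_zero.2 hlam.ne'),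
    integral_exp, smul_eq_mul, inv_neg, neg_mul, ← mul_neg, neg_sub, inv_mul_eq_div]
  exact div_le_div_of_nonneg_right (sub_le_self _ (exp_pos _).le) hlam.le

lemma integral_exp_neg_mul_logKernel_le_logKernelPrimitive {c lam a : ℝ} (hc : 0 ≤ c)
    (hlam : 0 ≤ lam) (ha₀ : 0 ≤ a) (ha₁ : a ≤ 1) :
    ∫ v in 0..a, exp (-lam * v) * logKernel c v ≤ logKernelPrimitive c a := by
  have hint := intervalIntegrable_logKernel hc ha₀ ha₁
  rw [← integral_logKernel hc ha₀ ha₁]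
  refine intervalIntegral.integral_mono_on ha₀ (hint.continuousOn_mul (by fun_prop)) hint
    fun v hv => mul_le_of_le_one_left (logKernel_nonneg hc hv.1) (exp_le_one_iff.2 ?_)
  nlinarith [hv.1]

lemma integral_exp_neg_mul_logKernel_le_logKernel_mul {c lam a : ℝ} (hc : 0 ≤ c)
    (hlam : 0 < lam) (ha₀ : 0 < a) (ha₁ : a ≤ 1) :
    ∫ v in a..1, exp (-lam * v) * logKernel c v ≤ logKernel c a * (exp (-lam * a) / lam) := by
  have hint : IntervalIntegrable (logKernel c) volume a 1 :=
    (intervalIntegrable_logKernel hc zero_le_one le_rfl).mono_set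
      (uIcc_subset_uIcc (mem_uIcc_of_le ha₀.le ha₁) right_mem_uIcc)
  calc ∫ v in a..1, exp (-lam * v) * logKernel c v
      ≤ ∫ v in a..1, logKernel c a * exp (-lam * v) := by
        refine intervalIntegral.integral_mono_on ha₁ (hint.continuousOn_mul (by fun_prop))
          (Continuous.intervalIntegrable (by fun_prop) _ _) fun v hv => ?_
        rw [mul_comm]
        have hle : logKernel c v ≤ logKernel c a :=
          logKernel_antitoneOn hc ⟨ha₀, ha₁⟩ ⟨ha₀.trans_le hv.1, hv.2⟩ hv.1
        exact mul_le_mul_of_nonneg_right hle (exp_pos _).le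
    _ = logKernel c a * ∫ v in a..1, exp (-lam * v) := intervalIntegral.integral_const_mul _ _
    _ ≤ logKernel c a * (exp (-lam * a) / lam) :=
        mul_le_mul_of_nonneg_left (integral_exp_neg_mul_le hlam a 1)
          (logKernel_nonneg hc ha₀.le)

lemma integral_exp_neg_mul_logKernel_le {c lam : ℝ} (hc : 0 ≤ c) (hlam : 1 ≤ lam) :
    ∫ v in 0..1, exp (-lam * v) * logKernel c v ≤ 2 * c / (2 + log lam) := by
  have hlam₀ : 0 < lam := by linarith
  have hL : 2 ≤ 2 + log lam := by linarith [log_nonneg hlam]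
  have ha₀ : 0 < lam⁻¹ := inv_pos.2 hlam₀
  have ha₁ : lam⁻¹ ≤ 1 := inv_le_one_of_one_le₀ hlam
  have hint : IntervalIntegrable (fun v => exp (-lam * v) * logKernel c v) volume 0 1 :=
    (intervalIntegrable_logKernel hc zero_le_one le_rfl).continuousOn_mul (by fun_prop)
  have head : logKernelPrimitive c lam⁻¹ = c / (2 + log lam) := by
    rw [logKernelPrimitive, if_neg (not_le.2 ha₀), log_inv, sub_neg_eq_add]
  have tail :
      logKernel c lam⁻¹ * (exp (-lam * lam⁻¹) / lam) = exp (-1) * c / (2 + log lam) ^ 2 := by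
    rw [logKernel, log_inv, sub_neg_eq_add, neg_mul, mul_inv_cancel₀ hlam₀.ne']
    field_simp
  have ha : lam⁻¹ ∈ uIcc 0 1 := mem_uIcc_of_le ha₀.le ha₁
  rw [← intervalIntegral.integral_add_adjacent_intervals
    (hint.mono_set (uIcc_subset_uIcc left_mem_uIcc ha))
    (hint.mono_set (uIcc_subset_uIcc ha right_mem_uIcc))]
  calc _ ≤ c / (2 + log lam) + exp (-1) * c / (2 + log lam) ^ 2 :=
        add_le_add (head ▸
            integral_exp_neg_mul_logKernel_le_logKernelPrimitive hc hlam₀.le ha₀.le ha₁)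
          (tail ▸ integral_exp_neg_mul_logKernel_le_logKernel_mul hc hlam₀ ha₀ ha₁)
    _ ≤ 2 * c / (2 + log lam) := by
        have he : exp (-1) ≤ 1 := exp_le_one_iff.2 (by norm_num)
        have htail : exp (-1) * c / (2 + log lam) ^ 2 ≤ c / (2 + log lam) := by
          rw [div_le_div_iff₀ (by positivity) (by positivity)]
          nlinarith [mul_nonneg (mul_nonneg hc (by linarith : (0 : ℝ) ≤ 2 + log lam))
            (by linarith : 0 ≤ 2 + log lam - exp (-1))]
        linarith [show 2 * c / (2 + log lam) = c / (2 + log lam) + c / (2 + log lam) by ring]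

theorem stmt_7 (c : ℝ) (hc : 0 < c)
    (G : ℝ → ℝ) (hG : ∀ t ∈ Set.Ioc (0:ℝ) 1, G t = c / (t * (Real.log (Real.exp 2 / t)) ^ 2)) :
    StrictAntiOn G (Set.Ioo (0:ℝ) 1) ∧
    ∀ lam : ℝ, 1 ≤ lam →
      ∫ v in (0:ℝ)..1, Real.exp (-lam * v) * G v ≤ 2 * c / (2 + Real.log lam) := by
  have hG' : EqOn (logKernel c) G (Ioc 0 1) := fun t ht => by
    rw [hG t ht, logKernel, log_exp_two_div ht.1]
  refine ⟨((logKernel_strictAntiOn hc).congr hG').mono Ioo_subset_Ioc_self, fun lam hlam => ?_⟩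
  calc ∫ v in 0..1, exp (-lam * v) * G v = ∫ v in 0..1, exp (-lam * v) * logKernel c v := by
        refine intervalIntegral.integral_congr_ae (ae_of_all _ fun v hv => ?_)
        rw [uIoc_of_le zero_le_one] at hv
        rw [hG' hv]
    _ ≤ 2 * c / (2 + log lam) := integral_exp_neg_mul_logKernel_le hc.le hlam
end

section
/- Let G_θ(w) = ∫₀^∞ e^{(θ-γ)s} s w^{s-1}/Γ(s+1) ds for w ∈ (0,1], where γ is the Euler–Mascheroni constant. Then as t → 0⁺, G_θ(t) = 1/(t (log(1/t))²) + (2θ + o(1))/(t (log(1/t))³). -/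
open Real Filter

noncomputable def Gtheta (θ : ℝ) (w : ℝ) : ℝ :=
  ∫ s in Set.Ioi (0:ℝ),
    Real.exp ((θ - Real.eulerMascheroniConstant) * s) * s * w ^ (s - 1) / Real.Gamma (s + 1)

/-!
With `a = log (1 / t) - θ + γ` the integrand of `G_θ(t)` is `t⁻¹ e^{-a s} s / Γ(s + 1)`, so
`t G_θ(t)` is the Laplace transform at `a` of `s / Γ(s + 1)`. Since
`1 / Γ(s + 1) = 1 + γ s + o(s)` at `0` and `1 / Γ` is bounded on `(0, ∞)`, Watson's lemma gives
this transform as `a⁻² + 2γ a⁻³ + o(a⁻³)`: after rescaling `s = u / a` the remainder is handled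
by dominated convergence. Re-expanding in `L = log (1 / t) = a + θ - γ` turns the coefficient
`2γ` into `2θ`.
-/

open MeasureTheory Set Topology Asymptotics

lemma integrableOn_exp_neg_mul_mul_pow (k : ℕ) {a : ℝ} (ha : 0 < a) :
    IntegrableOn (fun s => exp (-(a * s)) * s ^ k) (Ioi 0) := by
  refine (integrableOn_rpow_mul_exp_neg_mul_rpow (s := k) (by linarith [k.cast_nonneg (α := ℝ)])
    one_pos ha).congr_fun (fun s _ => ?_) measurableSet_Ioi
  simp [mul_comm]

lemma integral_exp_neg_mul_mul_pow (k : ℕ) {a : ℝ} (ha : 0 < a) :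
    ∫ s in Ioi 0, exp (-(a * s)) * s ^ k = (Nat.factorial k : ℝ) / a ^ (k + 1) := by
  have h := integral_rpow_mul_exp_neg_mul_Ioi (a := k + 1) (by positivity) ha
  rw [add_sub_cancel_right, Gamma_nat_eq_factorial, ← Nat.cast_succ, rpow_natCast] at h
  simp_rw [rpow_natCast] at h
  simp_rw [mul_comm (exp _)]
  rw [h, one_div, inv_pow, inv_mul_eq_div]

lemma integrableOn_exp_neg_mul_mul_of_abs_le {g : ℝ → ℝ} {k : ℕ} {K a : ℝ} (ha : 0 < a)
    (hg : ContinuousOn g (Ioi 0)) (hbound : ∀ s > 0, |g s| ≤ K * s ^ k) :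
    IntegrableOn (fun s => exp (-(a * s)) * g s) (Ioi 0) := by
  refine ((integrableOn_exp_neg_mul_mul_pow k ha).const_mul K).mono'
    (((continuous_exp.comp_continuousOn (by fun_prop)).mul hg).aestronglyMeasurable
      measurableSet_Ioi) ?_
  filter_upwards [ae_restrict_mem measurableSet_Ioi] with s hs
  rw [norm_mul, norm_of_nonneg (exp_pos _).le, Real.norm_eq_abs, mul_left_comm]
  exact mul_le_mul_of_nonneg_left (hbound s hs) (exp_pos _).le

lemma integral_exp_neg_mul_comp_inv_mul {g : ℝ → ℝ} (k : ℕ) {a : ℝ} (ha : 0 < a) :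
    a ^ (k + 1) * ∫ s in Ioi 0, exp (-(a * s)) * g s
      = ∫ u in Ioi 0, exp (-u) * (a ^ k * g (a⁻¹ * u)) := by
  have h := integral_comp_mul_left_Ioi (fun s => exp (-(a * s)) * g s) 0 (inv_pos.2 ha)
  simp only [mul_zero, inv_inv, smul_eq_mul, mul_inv_cancel_left₀ ha.ne'] at h
  simp_rw [mul_left_comm (exp _), integral_const_mul, h]
  ring

lemma tendsto_pow_mul_comp_inv_mul_of_isLittleO {g : ℝ → ℝ} {k : ℕ}
    (hsmall : g =o[𝓝[>] 0] fun s => s ^ k) {u : ℝ} (hu : 0 < u) :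
    Tendsto (fun a => a ^ k * g (a⁻¹ * u)) atTop (𝓝 0) := by
  have hs : Tendsto (fun a : ℝ => a⁻¹ * u) atTop (𝓝[>] 0) := by
    refine tendsto_nhdsWithin_iff.2 ⟨?_, ?_⟩
    · simpa using tendsto_inv_atTop_zero.mul_const u
    · filter_upwards [eventually_gt_atTop 0] with a ha using mul_pos (inv_pos.2 ha) hu
  have := (hsmall.tendsto_div_nhds_zero.comp hs).const_mul (u ^ k)
  rw [mul_zero] at this
  refine this.congr' ?_
  filter_upwards [eventually_gt_atTop 0] with a ha
  simp only [Function.comp_apply, mul_pow, inv_pow]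
  field_simp [(pow_pos hu k).ne']

theorem tendsto_pow_mul_integral_exp_neg_mul_of_isLittleO {g : ℝ → ℝ} {k : ℕ} {K : ℝ}
    (hg : ContinuousOn g (Ioi 0)) (hbound : ∀ s > 0, |g s| ≤ K * s ^ k)
    (hsmall : g =o[𝓝[>] 0] fun s => s ^ k) :
    Tendsto (fun a => a ^ (k + 1) * ∫ s in Ioi 0, exp (-(a * s)) * g s) atTop (𝓝 0) := by
  have hlim : Tendsto (fun a => ∫ u in Ioi 0, exp (-u) * (a ^ k * g (a⁻¹ * u))) atTop
      (𝓝 (∫ u in Ioi (0 : ℝ), (0 : ℝ))) := by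
    refine tendsto_integral_filter_of_dominated_convergence (fun u => K * (exp (-(1 * u)) * u ^ k))
      ?_ ?_ ?_ ?_
    · filter_upwards [eventually_gt_atTop 0] with a ha
      refine ContinuousOn.aestronglyMeasurable ?_ measurableSet_Ioi
      refine (continuous_exp.comp_continuousOn (by fun_prop)).mul (continuousOn_const.mul ?_)
      exact hg.comp (by fun_prop) fun u hu => mul_pos (inv_pos.2 ha) hu
    · filter_upwards [eventually_gt_atTop 0] with a ha
      filter_upwards [ae_restrict_mem measurableSet_Ioi] with u (hu : 0 < u)
      have hgu := hbound _ (mul_pos (inv_pos.2 ha) hu)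
      calc ‖exp (-u) * (a ^ k * g (a⁻¹ * u))‖ = exp (-u) * (a ^ k * |g (a⁻¹ * u)|) := by
            rw [norm_mul, norm_mul, norm_of_nonneg (exp_pos _).le, norm_of_nonneg (pow_pos ha k).le,
              Real.norm_eq_abs]
        _ ≤ exp (-u) * (a ^ k * (K * (a⁻¹ * u) ^ k)) := by gcongr
        _ = K * (exp (-(1 * u)) * u ^ k) := by rw [mul_pow, inv_pow, one_mul]; field_simp
    · exact (integrableOn_exp_neg_mul_mul_pow k one_pos).const_mul K
    · filter_upwards [ae_restrict_mem measurableSet_Ioi] with u (hu : 0 < u)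
      simpa using (tendsto_pow_mul_comp_inv_mul_of_isLittleO hsmall hu).const_mul (exp (-u))
  rw [integral_zero] at hlim
  refine hlim.congr' ?_
  filter_upwards [eventually_gt_atTop 0] with a ha
  exact (integral_exp_neg_mul_comp_inv_mul k ha).symm

lemma exists_abs_le_mul_of_isBigO {f : ℝ → ℝ} {A B : ℝ} (hf : f =O[𝓝[>] 0] id)
    (hAB : ∀ s > 0, |f s| ≤ A + B * s) : ∃ K, ∀ s > 0, |f s| ≤ K * s := by
  obtain ⟨c, hc⟩ := hf.bound
  obtain ⟨δ, hδ : 0 < δ, hnear⟩ := mem_nhdsGT_iff_exists_Ioo_subset.1 hc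
  refine ⟨max c (|A| / δ + B), fun s hs => ?_⟩
  rcases lt_or_ge s δ with hsδ | hδs
  · have : ‖f s‖ ≤ c * ‖id s‖ := hnear ⟨hs, hsδ⟩
    rw [Real.norm_eq_abs, id, Real.norm_eq_abs, abs_of_pos hs] at this
    exact this.trans (mul_le_mul_of_nonneg_right (le_max_left _ _) hs.le)
  · have hA : A ≤ |A| / δ * s := by
      rw [div_mul_eq_mul_div, le_div_iff₀ hδ]
      nlinarith [mul_le_mul_of_nonneg_right (le_abs_self A) hδ.le,
        mul_le_mul_of_nonneg_left hδs (abs_nonneg A)]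
    calc |f s| ≤ (|A| / δ + B) * s := by linarith [hAB s hs]
      _ ≤ _ := mul_le_mul_of_nonneg_right (le_max_right _ _) hs.le

lemma exists_inv_Gamma_le : ∃ M, ∀ x > 0, (Gamma x)⁻¹ ≤ M := by
  obtain ⟨x₀, hx₀, hmin⟩ := exists_isMinOn_Gamma_Ioi
  exact ⟨(Gamma x₀)⁻¹, fun x hx =>
    inv_anti₀ (Gamma_pos_of_pos (by linarith [hx₀.1])) (hmin (mem_Ioi.2 hx))⟩

lemma hasDerivAt_inv_Gamma_add_one :
    HasDerivAt (fun s => (Gamma (s + 1))⁻¹) eulerMascheroniConstant 0 := by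
  have h : HasDerivAt (fun s => Gamma (s + 1)) (-eulerMascheroniConstant) 0 := by
    simpa using (zero_add (1 : ℝ) ▸ hasDerivAt_Gamma_one).comp_add_const 0 1
  simpa [Gamma_one, Pi.inv_def] using h.inv (by simp [Gamma_one])

noncomputable def invGammaRemainder (s : ℝ) : ℝ :=
  (Gamma (s + 1))⁻¹ - 1 - eulerMascheroniConstant * s

lemma isLittleO_invGammaRemainder : invGammaRemainder =o[𝓝 0] id := by
  have h := hasDerivAt_iff_isLittleO.1 hasDerivAt_inv_Gamma_add_one
  simp only [zero_add, Gamma_one, inv_one, sub_zero, smul_eq_mul] at h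
  exact h.congr_left fun s => by rw [invGammaRemainder]; ring

lemma continuousOn_mul_invGammaRemainder :
    ContinuousOn (fun s => s * invGammaRemainder s) (Ioi (-1)) := by
  have hGamma : ContinuousOn (fun s => Gamma (s + 1)) (Ioi (-1)) :=
    differentiableOn_Gamma_Ioi.continuousOn.comp (by fun_prop) fun s (hs : -1 < s) =>
      show 0 < s + 1 by linarith
  exact continuousOn_id.mul (((hGamma.inv₀ fun s (hs : -1 < s) =>
    (Gamma_pos_of_pos (by linarith)).ne').sub continuousOn_const).sub (by fun_prop))

lemma exists_abs_invGammaRemainder_le : ∃ K, ∀ s > 0, |invGammaRemainder s| ≤ K * s := by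
  obtain ⟨M, hM⟩ := exists_inv_Gamma_le
  refine exists_abs_le_mul_of_isBigO (A := M + 1) (B := |eulerMascheroniConstant|)
    (isLittleO_invGammaRemainder.mono nhdsWithin_le_nhds).isBigO fun s hs => ?_
  have h0 := inv_nonneg.2 (Gamma_pos_of_pos (by linarith : 0 < s + 1)).le
  have hM' := hM (s + 1) (by linarith)
  have hγ := abs_le.1 (le_refl |eulerMascheroniConstant|)
  rw [invGammaRemainder, abs_le]
  constructor <;> nlinarith

lemma exists_abs_mul_invGammaRemainder_le :
    ∃ K, ∀ s > 0, |s * invGammaRemainder s| ≤ K * s ^ 2 := by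
  obtain ⟨K, hK⟩ := exists_abs_invGammaRemainder_le
  refine ⟨K, fun s hs => ?_⟩
  rw [abs_mul, abs_of_pos hs, pow_two, mul_left_comm]
  exact mul_le_mul_of_nonneg_left (hK s hs) hs.le

noncomputable def gammaLaplace (a : ℝ) : ℝ :=
  ∫ s in Ioi 0, exp (-(a * s)) * (s / Gamma (s + 1))

lemma gammaLaplace_sub_eq {a : ℝ} (ha : 0 < a) :
    gammaLaplace a - (1 / a ^ 2 + 2 * eulerMascheroniConstant / a ^ 3)
      = ∫ s in Ioi 0, exp (-(a * s)) * (s * invGammaRemainder s) := by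
  have h1 := integrableOn_exp_neg_mul_mul_pow 1 ha
  have h2 := (integrableOn_exp_neg_mul_mul_pow 2 ha).const_mul eulerMascheroniConstant
  obtain ⟨K, hK⟩ := exists_abs_mul_invGammaRemainder_le
  have h3 := integrableOn_exp_neg_mul_mul_of_abs_le ha
    (continuousOn_mul_invGammaRemainder.mono (Ioi_subset_Ioi (by norm_num))) hK
  have hsplit : gammaLaplace a = ∫ s in Ioi 0, (exp (-(a * s)) * s ^ 1
      + eulerMascheroniConstant * (exp (-(a * s)) * s ^ 2)
      + exp (-(a * s)) * (s * invGammaRemainder s)) :=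
    setIntegral_congr_fun measurableSet_Ioi fun s _ => by rw [invGammaRemainder]; ring
  rw [hsplit, integral_add _ h3, integral_add h1 h2, integral_const_mul,
    integral_exp_neg_mul_mul_pow 1 ha, integral_exp_neg_mul_mul_pow 2 ha]
  · simp only [Nat.factorial_one, Nat.factorial_two, Nat.cast_one, Nat.cast_ofNat]
    ring
  · exact h1.add h2

theorem tendsto_cube_mul_gammaLaplace_sub :
    Tendsto (fun a => a ^ 3 * (gammaLaplace a - (1 / a ^ 2 + 2 * eulerMascheroniConstant / a ^ 3)))
      atTop (𝓝 0) := by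
  obtain ⟨K, hK⟩ := exists_abs_mul_invGammaRemainder_le
  have hsmall : (fun s => s * invGammaRemainder s) =o[𝓝[>] 0] fun s => s ^ 2 := by
    simpa [pow_two] using (isBigO_refl id (𝓝[>] (0 : ℝ))).mul_isLittleO
      (isLittleO_invGammaRemainder.mono nhdsWithin_le_nhds)
  refine (tendsto_pow_mul_integral_exp_neg_mul_of_isLittleO
    (continuousOn_mul_invGammaRemainder.mono (Ioi_subset_Ioi (by norm_num))) hK hsmall).congr' ?_
  filter_upwards [eventually_gt_atTop 0] with a ha
  rw [gammaLaplace_sub_eq ha]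

lemma tendsto_cube_mul_comp_sub_sub {F : ℝ → ℝ} {b : ℝ}
    (hF : Tendsto (fun a => a ^ 3 * (F a - (1 / a ^ 2 + 2 * b / a ^ 3))) atTop (𝓝 0)) (c : ℝ) :
    Tendsto (fun L => L ^ 3 * F (L - c) - L - 2 * (b + c)) atTop (𝓝 0) := by
  have hshift : Tendsto (fun L => L - c) atTop atTop :=
    tendsto_atTop_add_const_right _ (-c) tendsto_id
  have hx : Tendsto (fun L => (L - c)⁻¹) atTop (𝓝 0) := tendsto_inv_atTop_zero.comp hshift
  -- with `x = (L - c)⁻¹` and `R` the quantity in `hF` at `L - c`, the target expression is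
  -- `(1 + c x)³ R + 3 c² x + c³ x² + 2 b ((1 + c x)³ - 1)`
  have hcube := ((hx.const_mul c).const_add 1).pow 3
  have key := (hcube.mul (hF.comp hshift)).add (((hx.const_mul (3 * c ^ 2)).add
    ((hx.pow 2).const_mul (c ^ 3))).add ((hcube.sub_const 1).const_mul (2 * b)))
  simp only [mul_zero, add_zero, one_pow, sub_self, ne_eq, OfNat.ofNat_ne_zero,
    not_false_eq_true, zero_pow] at key
  refine key.congr' ?_
  filter_upwards [eventually_gt_atTop c] with L hL
  have : L - c ≠ 0 := sub_ne_zero.2 hL.ne'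
  simp only [Function.comp_apply]
  field_simp
  ring

lemma Gtheta_eq_gammaLaplace (θ : ℝ) {t : ℝ} (ht : 0 < t) :
    Gtheta θ t = gammaLaplace (log (1 / t) - (θ - eulerMascheroniConstant)) / t := by
  rw [Gtheta, gammaLaplace, ← integral_div]
  refine setIntegral_congr_fun measurableSet_Ioi fun s _ => ?_
  set c := θ - eulerMascheroniConstant
  calc exp (c * s) * s * t ^ (s - 1) / Gamma (s + 1)
      = exp (c * s + log t * (s - 1)) * (s / Gamma (s + 1)) := by
        rw [rpow_def_of_pos ht, exp_add]; ring
    _ = exp (-((log (1 / t) - c) * s) + -log t) * (s / Gamma (s + 1)) := by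
        rw [one_div, log_inv]; ring_nf
    _ = _ := by rw [exp_add, exp_neg (log t), exp_log ht]; ring

theorem stmt_17 (θ : ℝ) :
    ∃ ε : ℝ → ℝ, Tendsto ε (nhdsWithin 0 (Set.Ioi 0)) (nhds 0) ∧
      ∀ᶠ t in nhdsWithin (0:ℝ) (Set.Ioi 0),
        Gtheta θ t = 1 / (t * (Real.log (1 / t)) ^ 2)
          + (2 * θ + ε t) / (t * (Real.log (1 / t)) ^ 3) := by
  set γ := eulerMascheroniConstant
  have hlog : Tendsto (fun t : ℝ => log (1 / t)) (𝓝[>] 0) atTop := by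
    simpa only [one_div, Function.comp_def] using tendsto_log_atTop.comp tendsto_inv_nhdsGT_zero
  refine ⟨fun t => log (1 / t) ^ 3 * gammaLaplace (log (1 / t) - (θ - γ)) - log (1 / t)
      - 2 * (γ + (θ - γ)),
    (tendsto_cube_mul_comp_sub_sub tendsto_cube_mul_gammaLaplace_sub (θ - γ)).comp hlog, ?_⟩
  filter_upwards [Ioo_mem_nhdsGT (zero_lt_one' ℝ)] with t ⟨ht0, ht1⟩
  have hL : 0 < log (1 / t) := log_pos (one_lt_one_div ht0 ht1)
  rw [Gtheta_eq_gammaLaplace θ ht0]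
  field_simp
  ring
end
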